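/- arXiv:2512.21678 — 2 statements merged into one kernel-verified Lean document; each statement's English description precedes it below -/
import Mathlib

section
/- Let w ≥ 4 and 0 ≤ s ≤ w. Then (B + C)^s = B^s + Q_s. -/
open Matrix

/-- The matrix `B` of MT-type recursions: first row zero, row `i` (0-indexed,
`1 ≤ i ≤ w-2`) is the standard basis row vector with a `1` in column `i+1`,
and the last row is `(a_{w-1}, …, a_0)` (stored as `a 0, …, a (w-1)`). -/
def mtB (w : ℕ) (a : Fin w → ZMod 2) : Matrix (Fin w) (Fin w) (ZMod 2) :=
  Matrix.of fun i j =>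
    if (i : ℕ) = w - 1 then a j
    else if 1 ≤ (i : ℕ) ∧ (j : ℕ) = (i : ℕ) + 1 then 1 else 0

/-- The matrix `C`: its only nonzero entry is a `1` in position `(1,2)` (1-indexed). -/
def mtC (w : ℕ) : Matrix (Fin w) (Fin w) (ZMod 2) :=
  Matrix.of fun i j => if (i : ℕ) = 0 ∧ (j : ℕ) = 1 then 1 else 0

/-- `Q_k = Σ_{i=0}^{k-1} B^i · C · B^{k-1-i}`. -/
def mtQ (w : ℕ) (a : Fin w → ZMod 2) (k : ℕ) : Matrix (Fin w) (Fin w) (ZMod 2) :=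
  ∑ i ∈ Finset.range k, (mtB w a) ^ i * mtC w * (mtB w a) ^ (k - 1 - i)

/-- Row `1` of `B^k` is the standard basis vector `e_{k+1}` for `k ≤ w - 2`. -/
lemma row1 (w : ℕ) (hw : 4 ≤ w) (a : Fin w → ZMod 2) :
    ∀ k, k ≤ w - 2 → ∀ j : Fin w,
    ((mtB w a) ^ k) ⟨1, by omega⟩ j = if (j : ℕ) = k + 1 then 1 else 0 := by
  intro k
  induction k with
  | zero =>
    intro _ j
    simp [Matrix.one_apply, Fin.ext_iff, eq_comm]
  | succ k ih =>
    intro hk j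
    rw [pow_succ, Matrix.mul_apply]
    have hk' : k ≤ w - 2 := by omega
    have hkw : k + 1 < w := by omega
    rw [Finset.sum_eq_single (⟨k + 1, hkw⟩ : Fin w)]
    · rw [ih hk']
      simp only [Fin.ext_iff]
      simp [mtB, show ¬ (k + 1 = w - 1) by omega]
    · intro b _ hb
      rw [ih hk']
      have hb' : (b : ℕ) ≠ k + 1 := by simpa [Fin.ext_iff] using hb
      simp [hb']
    · simp

/-- Entries of `C · B^k` for `k ≤ w - 2`. -/
lemma cb (w : ℕ) (hw : 4 ≤ w) (a : Fin w → ZMod 2) (k : ℕ) (hk : k ≤ w - 2)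
    (i l : Fin w) :
    (mtC w * (mtB w a) ^ k) i l = if (i : ℕ) = 0 ∧ (l : ℕ) = k + 1 then 1 else 0 := by
  rw [Matrix.mul_apply]
  rcases eq_or_ne (i : ℕ) 0 with hi | hi
  · rw [Finset.sum_eq_single (⟨1, by omega⟩ : Fin w)]
    · rw [row1 w hw a k hk]
      simp [mtC, hi]
    · intro b _ hb
      have hb' : (b : ℕ) ≠ 1 := by simpa [Fin.ext_iff] using hb
      simp [mtC, hb']
    · simp
  · simp [mtC, hi]

/-- `C · B^k · C = 0` for `k ≤ w - 2`. -/
lemma cbc (w : ℕ) (hw : 4 ≤ w) (a : Fin w → ZMod 2) (k : ℕ) (hk : k ≤ w - 2) :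
    mtC w * (mtB w a) ^ k * mtC w = 0 := by
  ext i j
  rw [Matrix.mul_apply]
  simp only [Matrix.zero_apply]
  apply Finset.sum_eq_zero
  intro l _
  rw [cb w hw a k hk]
  rcases eq_or_ne (l : ℕ) (k + 1) with hl | hl
  · simp [mtC, show ¬ ((l:ℕ) = 0) by omega]
  · simp [hl]

/-- `(B + C)^s = B^s + Q_s` for `s ≤ w`. -/
theorem stmt9 (w : ℕ) (hw : 4 ≤ w) (a : Fin w → ZMod 2) (s : ℕ) (hs : s ≤ w) :
    (mtB w a + mtC w) ^ s = (mtB w a) ^ s + mtQ w a s := by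
  induction s with
  | zero => simp [mtQ]
  | succ s ih =>
    have hs' : s ≤ w := by omega
    rw [pow_succ, ih hs', add_mul, mul_add, mul_add, pow_succ]
    have hQC : mtQ w a s * mtC w = 0 := by
      rw [mtQ, Finset.sum_mul]
      apply Finset.sum_eq_zero
      intro i hi
      simp only [Finset.mem_range] at hi
      rw [mul_assoc, mul_assoc, ← mul_assoc (mtC w), cbc w hw a _ (by omega), mul_zero]
    have hQ : mtQ w a s * mtB w a + (mtB w a) ^ s * mtC w = mtQ w a (s + 1) := by
      rw [mtQ, mtQ, Finset.sum_range_succ, Finset.sum_mul]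
      congr 1
      · apply Finset.sum_congr rfl
        intro i hi
        simp only [Finset.mem_range] at hi
        rw [show s + 1 - 1 - i = (s - 1 - i) + 1 from by omega, pow_succ, ← mul_assoc]
      · simp
    rw [hQC, add_zero]
    abel_nf
    congr 1
    rw [add_comm, hQ]
end

section
/- Let w ≥ 4, assume a_{w-1} = 1, and let 0 ≤ s ≤ w. Then the (2w)×w matrix over F₂ obtained by stacking B^s on top of Q_s (the block matrix with row blocks B^s and Q_s) has rank exactly w. -/
open Matrix

/-!
`D = B + C` is a companion-type matrix with determinant `a_{w-1}`, so it is invertible.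
`C M C` is `M₂₁ • C` (1-indexed), and the second row of `B^j` is `e_{j+2}` for `j ≤ w - 2`,
so `C B^j C = 0` there. Hence in the expansion of `(B + C)^s`, `s ≤ w`, every word with two
letters `C` vanishes and `D^s = B^s + Q_s`. Adding the two blocks of the stacked matrix is a left
multiplication, so its rank is at least that of `D^s`, which is `w`.
-/

theorem add_pow_of_mul_pow_mul_eq_zero {R : Type*} [Semiring R] (b c : R) (n : ℕ)
    (h : ∀ j, j + 2 ≤ n → c * b ^ j * c = 0) :
    (b + c) ^ n = b ^ n + ∑ i ∈ Finset.range n, b ^ i * c * b ^ (n - 1 - i) := by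
  induction n with
  | zero => simp
  | succ n ih =>
    have hc : (∑ i ∈ Finset.range n, b ^ i * c * b ^ (n - 1 - i)) * c = 0 := by
      rw [Finset.sum_mul]
      refine Finset.sum_eq_zero fun i hi => ?_
      rw [mul_assoc, mul_assoc, ← mul_assoc c, h _ (by simp at hi; omega), mul_zero]
    have hb : (∑ i ∈ Finset.range n, b ^ i * c * b ^ (n - 1 - i)) * b =
        ∑ i ∈ Finset.range n, b ^ i * c * b ^ (n + 1 - 1 - i) := by
      rw [Finset.sum_mul]
      refine Finset.sum_congr rfl fun i hi => ?_
      rw [mul_assoc, ← pow_succ, show n - 1 - i + 1 = n + 1 - 1 - i by simp at hi; omega]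
    rw [pow_succ, ih fun j hj => h j (by omega), add_mul, mul_add, mul_add, hc, hb,
      Finset.sum_range_succ, ← pow_succ]
    simp only [add_zero, Nat.add_sub_cancel, Nat.sub_self, pow_zero, mul_one]
    abel

theorem Matrix.rank_add_le_rank_fromRows {m n R : Type*} [Fintype m] [DecidableEq m] [Fintype n]
    [CommRing R] [StrongRankCondition R] (A B : Matrix m n R) :
    (A + B).rank ≤ (fromRows A B).rank := by
  simpa only [fromCols_mul_fromRows, Matrix.one_mul] using
    rank_mul_le_right (fromCols (1 : Matrix m m R) 1) (fromRows A B)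

section

variable {w : ℕ} (a : Fin w → ZMod 2)

theorem mtB_row (i : Fin w) (h₁ : 1 ≤ (i : ℕ)) (h₂ : (i : ℕ) + 2 ≤ w) :
    mtB w a i = Pi.single ⟨i + 1, by omega⟩ 1 := by
  ext j
  simp only [mtB, of_apply, Pi.single_apply, Fin.ext_iff]
  rw [if_neg (by omega)]
  grind

theorem mtB_pow_row_one {j : ℕ} (hj : j + 2 ≤ w) :
    (mtB w a ^ j) ⟨1, by omega⟩ = Pi.single ⟨1 + j, by omega⟩ 1 := by
  induction j with
  | zero =>
    ext k
    simp [one_apply, Pi.single_apply, eq_comm]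
  | succ j ih =>
    rw [pow_succ, mul_apply_eq_vecMul, ih (by omega), single_one_vecMul, row,
      mtB_row a _ (by simp) (by simp; omega)]
    simp only [Nat.add_assoc]

theorem mtC_eq_single (hw : 2 ≤ w) : mtC w = single ⟨0, by omega⟩ ⟨1, by omega⟩ 1 := by
  ext i j
  simp [mtC, single_apply, Fin.ext_iff, eq_comm]

theorem mtC_mul_mtB_pow_mul_mtC {j : ℕ} (hj : j + 2 ≤ w) :
    mtC w * mtB w a ^ j * mtC w = 0 := by
  rw [mtC_eq_single (by omega), single_mul_mul_single, mtB_pow_row_one a hj,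
    Pi.single_eq_of_ne (by simp [Fin.ext_iff]; omega)]
  simp

theorem mtB_pow_add_mtQ {s : ℕ} (hs : s ≤ w) :
    mtB w a ^ s + mtQ w a s = (mtB w a + mtC w) ^ s :=
  (add_pow_of_mul_pow_mul_eq_zero _ _ s fun _ hj => mtC_mul_mtB_pow_mul_mtC a (by omega)).symm

theorem mtB_add_mtC_row (i : Fin w) (hi : (i : ℕ) + 2 ≤ w) :
    (mtB w a + mtC w) i = Pi.single ⟨i + 1, by omega⟩ 1 := by
  ext j
  simp only [Matrix.add_apply, mtB, mtC, of_apply, Pi.single_apply, Fin.ext_iff]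
  rw [if_neg (by omega)]
  grind

theorem mtB_add_mtC_row_last (hw : 2 ≤ w) : (mtB w a + mtC w) ⟨w - 1, by omega⟩ = a := by
  ext j
  simp only [Matrix.add_apply, mtB, mtC, of_apply, if_true]
  rw [if_neg (by omega), add_zero]

theorem isUnit_mtB_add_mtC (hw : 2 ≤ w) (ha : a ⟨0, by omega⟩ = 1) :
    IsUnit (mtB w a + mtC w) := by
  suffices hker : ∀ x, (mtB w a + mtC w) *ᵥ x = 0 → x = 0 by
    refine mulVec_injective_iff_isUnit.mp fun x y hxy => sub_eq_zero.mp (hker _ ?_)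
    rw [mulVec_sub, hxy, sub_self]
  intro x hx
  have htail : ∀ k : Fin w, 1 ≤ (k : ℕ) → x k = 0 := by
    intro k hk
    have := congrFun hx ⟨k - 1, by omega⟩
    rwa [mulVec_apply, row, mtB_add_mtC_row a _ (by simp; omega), single_one_dotProduct,
      show (⟨k - 1 + 1, _⟩ : Fin w) = k from Fin.ext (by simp; omega)] at this
  have hx₀ : x = Pi.single ⟨0, by omega⟩ (x ⟨0, by omega⟩) := by
    ext k
    by_cases hk : (k : ℕ) = 0
    · rw [show k = ⟨0, by omega⟩ from Fin.ext hk, Pi.single_eq_same]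
    · rw [htail k (by omega), Pi.single_eq_of_ne (by simpa [Fin.ext_iff] using hk)]
  have hlast := congrFun hx ⟨w - 1, by omega⟩
  rw [mulVec_apply, row, mtB_add_mtC_row_last a hw, hx₀, dotProduct_single, ha, one_mul] at hlast
  rw [hx₀, hlast, Pi.zero_apply, Pi.single_zero]

end

/-- the `2w × w` matrix obtained by stacking `B^s` on top of `Q_s`
has rank exactly `w` (assuming `a_{w-1} = 1`). -/
theorem stmt11 (w : ℕ) (hw : 4 ≤ w) (a : Fin w → ZMod 2) (ha : a ⟨0, by omega⟩ = 1)
    (s : ℕ) (hs : s ≤ w) :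
    (Matrix.fromRows ((mtB w a) ^ s) (mtQ w a s)).rank = w := by
  have hD : IsUnit ((mtB w a + mtC w) ^ s) := (isUnit_mtB_add_mtC a (by omega) ha).pow s
  refine le_antisymm (rank_le_card_width _ |>.trans_eq (Fintype.card_fin w)) ?_
  calc w = ((mtB w a + mtC w) ^ s).rank := by rw [rank_of_isUnit _ hD, Fintype.card_fin]
    _ ≤ _ := by rw [← mtB_pow_add_mtQ a hs]; exact rank_add_le_rank_fromRows _ _
end
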